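/- arXiv:2111.11004 — 4 statements merged into one kernel-verified Lean document; each statement's English description precedes it below -/
import Mathlib

section
/- Let A be a real d×d matrix that is negative definite (i.e., x^T A x < 0 for all nonzero x), and let w > 0 be a real number with w(w+1) > ‖A‖², where ‖A‖ is the operator norm. Then the 3d×3d block matrix G = [[-wI, -Aᵀ, 0], [0, -I, A], [I, 0, 0]] is Hurwitz, i.e., every eigenvalue of G has strictly negative real part. -/
open Matrix
open scoped Matrix.Norms.L2Operator

/-- The 3d×3d block matrix G = [[-wI, -Aᵀ, 0], [0, -I, A], [I, 0, 0]]. -/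
noncomputable def blockG {d : ℕ} (A : Matrix (Fin d) (Fin d) ℝ) (w : ℝ) :
    Matrix (Fin d ⊕ (Fin d ⊕ Fin d)) (Fin d ⊕ (Fin d ⊕ Fin d)) ℝ :=
  Matrix.fromBlocks (-w • (1 : Matrix (Fin d) (Fin d) ℝ))
    (Matrix.fromCols (-Aᵀ) 0)
    (Matrix.fromRows 0 1)
    (Matrix.fromBlocks (-1) A 0 0)

/-!
If `G v = μ v` with `v = (x, y, z)`, then `x = μ z`, `(μ + 1) y = A z` and `μ (μ + w) z = -Aᵀ y`.
Either `μ = -1`, or `z ≠ 0` and pairing the last equation with `z`, then using the second, gives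
`μ (μ + 1) (μ + w) ‖z‖² = -‖A z‖²`. So `μ` is a root of `μ³ + (w + 1) μ² + w μ + c` with
`c = ‖A z‖² / ‖z‖²`, where `0 < c` because a definite `A` is injective, and `c ≤ ‖A‖² < w (w + 1)`.
By the Routh–Hurwitz criterion for cubics, every root of such a polynomial has negative real part.
-/

theorem re_neg_of_cubic_eq_zero {a b c : ℝ} (hb : 0 < b) (hc : 0 < c) (habc : c < a * b)
    {μ : ℂ} (h : μ ^ 3 + a * μ ^ 2 + b * μ + c = 0) : μ.re < 0 := by
  have ha : 0 < a := pos_of_mul_pos_left (hc.trans habc) hb.le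
  obtain ⟨α, β⟩ := μ
  have hre := congrArg Complex.re h
  have him := congrArg Complex.im h
  simp only [pow_succ, pow_zero, one_mul, Complex.add_re, Complex.add_im, Complex.mul_re,
    Complex.mul_im, Complex.ofReal_re, Complex.ofReal_im, Complex.zero_re, Complex.zero_im]
    at hre him
  ring_nf at hre him
  by_contra! hα
  have him' : β * (3 * α ^ 2 - β ^ 2 + 2 * a * α + b) = 0 := by linear_combination him
  rcases mul_eq_zero.mp him' with hβ | hβ
  · subst hβ
    nlinarith [pow_nonneg hα 3, mul_nonneg ha.le (sq_nonneg α), mul_nonneg hb.le hα]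
  · -- eliminating `β²` leaves a polynomial in `α` with positive coefficients
    have hreal : 8 * α ^ 3 + 8 * a * α ^ 2 + 2 * (b + a ^ 2) * α + (a * b - c) = 0 := by
      linear_combination -hre + (3 * α + a) * hβ
    nlinarith [pow_nonneg hα 3, mul_nonneg ha.le (sq_nonneg α), mul_nonneg hb.le hα,
      mul_nonneg (sq_nonneg a) hα]

theorem Sum.smul_elim {α β M γ : Type*} [SMul M γ] (c : M) (f : α → γ) (g : β → γ) :
    c • Sum.elim f g = Sum.elim (c • f) (c • g) := by
  ext (i | i) <;> rfl

theorem Matrix.exists_mulVec_eq_smul_of_mem_spectrum {K n : Type*} [Field K] [Fintype n]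
    [DecidableEq n] {M : Matrix n n K} {μ : K} (h : μ ∈ spectrum K M) :
    ∃ v ≠ 0, M *ᵥ v = μ • v := by
  rw [← spectrum_toLin', ← Module.End.hasEigenvalue_iff_mem_spectrum] at h
  obtain ⟨v, hv, hv0⟩ := h.exists_hasEigenvector
  exact ⟨v, hv0, by simpa using Module.End.mem_eigenspace_iff.mp hv⟩

theorem cubic_mul_dotProduct_star_self {R n : Type*} [CommRing R] [StarRing R] [Fintype n]
    (B : Matrix n n R) {μ w : R} {x y z : n → R}
    (hx : -w • x - Bᴴ *ᵥ y = μ • x) (hy : -y + B *ᵥ z = μ • y) (hz : x = μ • z) :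
    μ * (μ + 1) * (μ + w) * (star z ⬝ᵥ z) = -(star (B *ᵥ z) ⬝ᵥ B *ᵥ z) := by
  have hz' : (μ * (μ + w)) • z = -(Bᴴ *ᵥ y) := by
    subst hz; linear_combination (norm := module) -hx
  have hy' : (μ + 1) • y = B *ᵥ z := by linear_combination (norm := module) -hy
  calc μ * (μ + 1) * (μ + w) * (star z ⬝ᵥ z) = (μ + 1) * (star z ⬝ᵥ (μ * (μ + w)) • z) := by
        rw [dotProduct_smul, smul_eq_mul]; ring
    _ = -(star (B *ᵥ z) ⬝ᵥ (μ + 1) • y) := by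
        rw [hz', dotProduct_neg, dotProduct_mulVec, ← star_mulVec, dotProduct_smul, smul_eq_mul]
        ring
    _ = -(star (B *ᵥ z) ⬝ᵥ B *ᵥ z) := by rw [hy']

theorem star_dotProduct_self_eq_sum_norm_sq {n : Type*} [Fintype n] (z : n → ℂ) :
    star z ⬝ᵥ z = ((∑ i, ‖z i‖ ^ 2 : ℝ) : ℂ) := by
  simp [dotProduct, Complex.conj_mul']

theorem sum_norm_sq_pos {n E : Type*} [Fintype n] [NormedAddCommGroup E] {z : n → E}
    (hz : z ≠ 0) : 0 < ∑ i, ‖z i‖ ^ 2 := by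
  obtain ⟨i, hi⟩ := Function.ne_iff.mp hz
  exact Finset.sum_pos' (fun j _ => by positivity) ⟨i, Finset.mem_univ i, by positivity⟩

theorem sum_norm_sq_eq_sum_re_sq_add_sum_im_sq {n : Type*} [Fintype n] (z : n → ℂ) :
    ∑ i, ‖z i‖ ^ 2 = ∑ i, (z i).re ^ 2 + ∑ i, (z i).im ^ 2 := by
  rw [← Finset.sum_add_distrib]
  exact Finset.sum_congr rfl fun i _ => by rw [Complex.sq_norm, Complex.normSq_apply]; ring

theorem Matrix.sum_mulVec_sq_le {m n : Type*} [Fintype m] [Fintype n] [DecidableEq n]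
    (A : Matrix m n ℝ) (p : n → ℝ) : ∑ i, (A *ᵥ p) i ^ 2 ≤ ‖A‖ ^ 2 * ∑ j, p j ^ 2 := by
  have h := pow_le_pow_left₀ (norm_nonneg _) (A.l2_opNorm_mulVec (WithLp.toLp 2 p)) 2
  rw [mul_pow, EuclideanSpace.norm_sq_eq, EuclideanSpace.norm_sq_eq] at h
  simpa using h

namespace Matrix

variable {m n : Type*} [Fintype n] (A : Matrix m n ℝ) (z : n → ℂ)

theorem re_map_ofReal_mulVec (i : m) :
    ((A.map (algebraMap ℝ ℂ) *ᵥ z) i).re = (A *ᵥ fun j => (z j).re) i := by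
  simp [mulVec, dotProduct, Complex.re_sum]

theorem im_map_ofReal_mulVec (i : m) :
    ((A.map (algebraMap ℝ ℂ) *ᵥ z) i).im = (A *ᵥ fun j => (z j).im) i := by
  simp [mulVec, dotProduct, Complex.im_sum]

theorem eq_zero_of_map_ofReal_mulVec_eq_zero (hA : ∀ u, A *ᵥ u = 0 → u = 0)
    (hz : A.map (algebraMap ℝ ℂ) *ᵥ z = 0) : z = 0 := by
  have hre := hA _ (funext fun i => by rw [← re_map_ofReal_mulVec, hz]; rfl)
  have him := hA _ (funext fun i => by rw [← im_map_ofReal_mulVec, hz]; rfl)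
  exact funext fun j => Complex.ext (congrFun hre j) (congrFun him j)

theorem sum_norm_map_ofReal_mulVec_sq_le [Fintype m] [DecidableEq n] :
    ∑ i, ‖(A.map (algebraMap ℝ ℂ) *ᵥ z) i‖ ^ 2 ≤ ‖A‖ ^ 2 * ∑ j, ‖z j‖ ^ 2 := by
  simp only [sum_norm_sq_eq_sum_re_sq_add_sum_im_sq, re_map_ofReal_mulVec,
    im_map_ofReal_mulVec, mul_add]
  exact add_le_add (A.sum_mulVec_sq_le _) (A.sum_mulVec_sq_le _)

end Matrix

theorem blockG_map_mulVec {d : ℕ} (A : Matrix (Fin d) (Fin d) ℝ) (w : ℝ) (x y z : Fin d → ℂ) :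
    (blockG A w).map (algebraMap ℝ ℂ) *ᵥ Sum.elim x (Sum.elim y z) =
      Sum.elim (-(w : ℂ) • x - (A.map (algebraMap ℝ ℂ))ᴴ *ᵥ y)
        (Sum.elim (-y + A.map (algebraMap ℝ ℂ) *ᵥ z) x) := by
  have hconj : (A.map Complex.ofReal)ᴴ = Aᵀ.map Complex.ofReal := by
    ext i j; simp
  simp [hconj, blockG, fromBlocks_map, fromCols_map, fromRows_map, fromBlocks_mulVec,
    Matrix.map_neg, Matrix.map_smul, Matrix.map_one, sub_eq_add_neg, neg_mulVec, smul_mulVec,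
    ← Sum.elim_add_add]

theorem blockG_hurwitz {d : ℕ} (A : Matrix (Fin d) (Fin d) ℝ) (w : ℝ)
    (hA : ∀ x : Fin d → ℝ, x ≠ 0 → x ⬝ᵥ A.mulVec x < 0)
    (hw : 0 < w) (hwA : ‖A‖ ^ 2 < w * (w + 1)) :
    ∀ μ ∈ spectrum ℂ ((blockG A w).map (algebraMap ℝ ℂ)), μ.re < 0 := by
  intro μ hμ
  obtain ⟨v, hv0, hv⟩ := exists_mulVec_eq_smul_of_mem_spectrum hμ
  rw [← Sum.elim_comp_inl_inr v, ← Sum.elim_comp_inl_inr (v ∘ Sum.inr)] at hv hv0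
  set B := A.map (algebraMap ℝ ℂ)
  set y := (v ∘ Sum.inr) ∘ Sum.inl
  set z := (v ∘ Sum.inr) ∘ Sum.inr
  rw [blockG_map_mulVec, Sum.smul_elim, Sum.smul_elim, Sum.elim_eq_iff, Sum.elim_eq_iff] at hv
  obtain ⟨hx, hy, hxz⟩ := hv
  rcases eq_or_ne μ (-1) with rfl | hμ1
  · norm_num
  have hz : z ≠ 0 := by
    intro hz
    have hy0 : y = 0 := by
      rw [hz, mulVec_zero] at hy
      have hy' : (μ + 1) • y = 0 := by linear_combination (norm := module) -hy
      exact (smul_eq_zero.mp hy').resolve_left fun h => hμ1 (eq_neg_of_add_eq_zero_left h)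
    exact hv0 (by simp [hxz, hy0, hz])
  have hker : ∀ u, A *ᵥ u = 0 → u = 0 := fun u hu => by
    by_contra hu0
    simpa [hu] using hA u hu0
  have hcubic := cubic_mul_dotProduct_star_self B hx hy hxz
  rw [star_dotProduct_self_eq_sum_norm_sq, star_dotProduct_self_eq_sum_norm_sq] at hcubic
  set S := ∑ i, ‖z i‖ ^ 2
  set T := ∑ i, ‖(B *ᵥ z) i‖ ^ 2
  have hS : 0 < S := sum_norm_sq_pos hz
  have hT : 0 < T := sum_norm_sq_pos (mt (eq_zero_of_map_ofReal_mulVec_eq_zero A z hker) hz)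
  have hTS : T ≤ ‖A‖ ^ 2 * S := sum_norm_map_ofReal_mulVec_sq_le A z
  refine re_neg_of_cubic_eq_zero (a := w + 1) hw (div_pos hT hS) ?_ ?_
  · rw [div_lt_iff₀ hS]; nlinarith
  · have hS' : (S : ℂ) ≠ 0 := by exact_mod_cast hS.ne'
    push_cast
    field_simp
    linear_combination hcubic
end

section
/- Let a₃, a₂, a₁, a₀ be positive real numbers with a₁a₂ > a₀a₃. Then every complex root λ of the cubic polynomial a₃λ³ + a₂λ² + a₁λ + a₀ has strictly negative real part. -/
/-- Routh–Hurwitz criterion for cubics: if a₃,a₂,a₁,a₀ > 0 and a₁a₂ > a₀a₃, then every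
complex root of a₃λ³ + a₂λ² + a₁λ + a₀ has strictly negative real part. -/
theorem routh_hurwitz_cubic (a₃ a₂ a₁ a₀ : ℝ)
    (h₃ : 0 < a₃) (h₂ : 0 < a₂) (h₁ : 0 < a₁) (h₀ : 0 < a₀)
    (h : a₀ * a₃ < a₁ * a₂) :
    ∀ lam : ℂ, (a₃ : ℂ) * lam ^ 3 + (a₂ : ℂ) * lam ^ 2 + (a₁ : ℂ) * lam + (a₀ : ℂ) = 0 →
      lam.re < 0 := by
  intro lam heq
  by_contra hx'
  push_neg at hx'
  set x := lam.re with hxdef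
  set y := lam.im with hydef
  rw [Complex.ext_iff] at heq
  simp only [Complex.add_re, Complex.add_im, Complex.mul_re, Complex.mul_im,
    Complex.ofReal_re, Complex.ofReal_im, Complex.zero_re, Complex.zero_im,
    pow_succ, pow_zero, one_mul] at heq
  obtain ⟨hre, him⟩ := heq
  ring_nf at hre him
  rcases eq_or_ne lam.im 0 with hy | hy
  · rw [hy] at hre
    nlinarith [mul_nonneg (mul_nonneg hx' hx') hx', mul_nonneg hx' hx']
  · have hK : 3 * a₃ * lam.re ^ 2 - a₃ * lam.im ^ 2 + 2 * a₂ * lam.re + a₁ = 0 := by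
      have h2 : lam.im * (3 * a₃ * lam.re ^ 2 - a₃ * lam.im ^ 2 + 2 * a₂ * lam.re + a₁)
          = lam.im * 0 := by rw [mul_zero]; linear_combination him
      exact mul_left_cancel₀ hy h2
    have key : 8 * a₃ ^ 2 * lam.re ^ 3 + 8 * a₂ * a₃ * lam.re ^ 2
        + 2 * (a₁ * a₃ + a₂ ^ 2) * lam.re + (a₁ * a₂ - a₀ * a₃) = 0 := by
      linear_combination (-a₃) * hre + (3 * a₃ * lam.re + a₂) * hK
    nlinarith [key, mul_nonneg (mul_nonneg hx' hx') hx', mul_nonneg hx' hx',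
      mul_pos h₃ h₃, mul_pos h₂ h₃, mul_pos h₁ h₃, mul_pos h₂ h₂]
end

section
/- Let A be a real d×d matrix and w ∈ ℝ. If λ is an eigenvalue of the 3d×3d block matrix G = [[-wI, -Aᵀ, 0], [0, -I, A], [I, 0, 0]], then det(λ(1+λ)(w+λ)I + AᵀA) = 0. -/
/-!
An eigenvector `(x, y, z)` of `G` for `λ` satisfies `x = λ z`, `A z = (1 + λ) y` and
`Aᵀ y = -λ (w + λ) z`, hence `(λ (1 + λ) (w + λ) I + AᵀA) z = 0`. When `z = 0`, the vector `y` is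
nonzero, so `λ = -1` and `y` lies in the kernel of `Aᵀ`, which makes `AᵀA` singular.
-/

open Matrix

section

variable {R n : Type*} [CommRing R] [DecidableEq n]

def genBlockG (A : Matrix n n R) (w : R) : Matrix (n ⊕ (n ⊕ n)) (n ⊕ (n ⊕ n)) R :=
  fromBlocks (-w • 1) (fromCols (-Aᵀ) 0) (fromRows 0 1) (fromBlocks (-1) A 0 0)

theorem blockG_eq_genBlockG {d : ℕ} (A : Matrix (Fin d) (Fin d) ℝ) (w : ℝ) :
    blockG A w = genBlockG A w := rfl

theorem genBlockG_map {S : Type*} [CommRing S] (A : Matrix n n R) (w : R) (f : R →+* S) :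
    (genBlockG A w).map f = genBlockG (A.map f) (f w) := by
  simp only [genBlockG, fromBlocks_map, fromCols_map, fromRows_map, transpose_map,
    Matrix.map_neg _ (map_neg f), Matrix.map_smul' _ _ _ (map_mul f),
    Matrix.map_one _ (map_zero f) (map_one f), Matrix.map_zero _ (map_zero f), map_neg]

variable [Fintype n]

theorem genBlockG_mulVec (A : Matrix n n R) (w : R) (x y z : n → R) :
    genBlockG A w *ᵥ Sum.elim x (Sum.elim y z) =
      Sum.elim (-(w • x) - Aᵀ *ᵥ y) (Sum.elim (A *ᵥ z - y) x) := by
  simp only [genBlockG, neg_smul, fromBlocks_mulVec, Sum.elim_comp_inl, neg_mulVec, smul_mulVec,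
    one_mulVec, Sum.elim_comp_inr, fromCols_mulVec, zero_mulVec, add_zero, add_comm,
    fromRows_mulVec, ← Sum.elim_add_add, sub_eq_add_neg]

theorem smul_one_add_transpose_mul_mulVec_eq_zero {A : Matrix n n R} {w lam : R} {y z : n → R}
    (hAz : A *ᵥ z = (1 + lam) • y) (hAty : Aᵀ *ᵥ y = -(lam * (w + lam)) • z) :
    ((lam * (1 + lam) * (w + lam)) • 1 + Aᵀ * A) *ᵥ z = 0 := by
  rw [add_mulVec, smul_mulVec, one_mulVec, ← mulVec_mulVec, hAz, mulVec_smul, hAty, smul_smul,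
    ← add_smul]
  convert zero_smul R z
  ring

variable [IsDomain R]

theorem det_smul_one_add_transpose_mul_eq_zero {A : Matrix n n R} {w lam : R} {x y z : n → R}
    (hxyz : Sum.elim x (Sum.elim y z) ≠ 0) (hx : x = lam • z) (hAz : A *ᵥ z = (1 + lam) • y)
    (hAty : Aᵀ *ᵥ y = -(lam * (w + lam)) • z) :
    ((lam * (1 + lam) * (w + lam)) • 1 + Aᵀ * A).det = 0 := by
  by_cases hz : z = 0
  · subst hz
    have hy : y ≠ 0 := by rintro rfl; simp [hx] at hxyz
    have hlam : 1 + lam = 0 := by simpa [hy] using hAz.symm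
    have hdetAt : Aᵀ.det = 0 := exists_mulVec_eq_zero_iff.1 ⟨y, hy, by simpa using hAty⟩
    rw [hlam, mul_zero, zero_mul, zero_smul, zero_add, det_mul, hdetAt, zero_mul]
  · exact exists_mulVec_eq_zero_iff.1 ⟨z, hz, smul_one_add_transpose_mul_mulVec_eq_zero hAz hAty⟩

theorem det_smul_one_add_transpose_mul_eq_zero_of_genBlockG_mulVec_eq_smul {A : Matrix n n R}
    {w lam : R} {v : n ⊕ (n ⊕ n) → R} (hv0 : v ≠ 0) (hv : genBlockG A w *ᵥ v = lam • v) :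
    ((lam * (1 + lam) * (w + lam)) • 1 + Aᵀ * A).det = 0 := by
  obtain ⟨x, y, z, rfl⟩ : ∃ x y z, v = Sum.elim x (Sum.elim y z) :=
    ⟨v ∘ Sum.inl, v ∘ Sum.inr ∘ Sum.inl, v ∘ Sum.inr ∘ Sum.inr, by ext (i | i | i) <;> rfl⟩
  have hsmul :
      lam • Sum.elim x (Sum.elim y z) = Sum.elim (lam • x) (Sum.elim (lam • y) (lam • z)) := by
    ext (i | i | i) <;> rfl
  rw [genBlockG_mulVec, hsmul, Sum.elim_eq_iff, Sum.elim_eq_iff] at hv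
  obtain ⟨hx, hy, hz⟩ := hv
  refine det_smul_one_add_transpose_mul_eq_zero hv0 hz ?_ ?_
  · linear_combination (norm := module) hy
  · linear_combination (norm := module) -hx - (w + lam) • hz

end

theorem eigenvalue_blockG_det_eq_zero {d : ℕ} (A : Matrix (Fin d) (Fin d) ℝ) (w : ℝ)
    (lam : ℂ) (hlam : lam ∈ spectrum ℂ ((blockG A w).map (algebraMap ℝ ℂ))) :
    ((lam * (1 + lam) * (w + lam)) • (1 : Matrix (Fin d) (Fin d) ℂ) +
      (Aᵀ * A).map (algebraMap ℝ ℂ)).det = 0 := by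
  rw [← Matrix.spectrum_toLin', ← Module.End.hasEigenvalue_iff_mem_spectrum] at hlam
  obtain ⟨v, hv⟩ := hlam.exists_hasEigenvector
  rw [blockG_eq_genBlockG, genBlockG_map] at hv
  rw [Matrix.map_mul, transpose_map]
  exact det_smul_one_add_transpose_mul_eq_zero_of_genBlockG_mulVec_eq_smul hv.2 hv.apply_eq_smul
end

section
/- Let Φ ∈ ℝ^{n×d} have full column rank, D be an n×n diagonal matrix with strictly positive diagonal entries d(s) summing to 1, P an n×n row-stochastic matrix with stationary distribution d (i.e., dᵀP = dᵀ), and 0 ≤ γ < 1. Then the matrix Ā = Φᵀ D (γP - I) Φ is negative definite, i.e., xᵀĀx < 0 for all nonzero x ∈ ℝ^d. -/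
open Matrix

theorem Abar_negDef {n d : ℕ} (Φ : Matrix (Fin n) (Fin d) ℝ) (hΦ : Φ.rank = d)
    (dv : Fin n → ℝ) (hdpos : ∀ s, 0 < dv s) (hdsum : ∑ s, dv s = 1)
    (P : Matrix (Fin n) (Fin n) ℝ)
    (hPnonneg : ∀ i j, 0 ≤ P i j) (hProw : ∀ i, ∑ j, P i j = 1)
    (hstat : Matrix.vecMul dv P = dv)
    (γ : ℝ) (hγ0 : 0 ≤ γ) (hγ1 : γ < 1) :
    ∀ x : Fin d → ℝ, x ≠ 0 →
      x ⬝ᵥ (Φᵀ * Matrix.diagonal dv * (γ • P - 1) * Φ).mulVec x < 0 := by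
  intro x hx
  set y : Fin n → ℝ := Φ.mulVec x with hy
  -- y ≠ 0 since Φ has full column rank
  have hker : LinearMap.ker Φ.mulVecLin = ⊥ := by
    have h1 := Φ.mulVecLin.finrank_range_add_finrank_ker
    rw [show Module.finrank ℝ (Fin d → ℝ) = d from Module.finrank_fin_fun ℝ] at h1
    have h2 : Matrix.rank Φ = Module.finrank ℝ (LinearMap.range Φ.mulVecLin) := rfl
    rw [← Submodule.finrank_eq_zero (S := LinearMap.ker Φ.mulVecLin)]
    omega
  have hy0 : y ≠ 0 := by
    intro h
    apply hx
    have : x ∈ LinearMap.ker Φ.mulVecLin := by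
      simpa [Matrix.mulVecLin, hy] using h
    rw [hker] at this
    simpa using this
  set z : Fin n → ℝ := P.mulVec y with hz
  -- rewrite the quadratic form
  have hform : x ⬝ᵥ (Φᵀ * Matrix.diagonal dv * (γ • P - 1) * Φ).mulVec x
      = ∑ i, dv i * (y i * (γ * z i - y i)) := by
    rw [Matrix.mul_assoc, Matrix.mul_assoc, ← Matrix.mulVec_mulVec,
      Matrix.dotProduct_mulVec, Matrix.vecMul_transpose,
      ← Matrix.mulVec_mulVec, ← Matrix.mulVec_mulVec, ← hy]
    have h2 : (γ • P - 1) *ᵥ y = fun i => γ * z i - y i := by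
      funext i
      rw [Matrix.sub_mulVec]
      simp [Matrix.smul_mulVec, Matrix.one_mulVec, hz]
    rw [h2]
    simp only [dotProduct, Matrix.mulVec_diagonal]
    exact Finset.sum_congr rfl fun i _ => by ring
  rw [hform]
  -- key sums
  set Q : ℝ := ∑ i, dv i * (y i)^2 with hQ
  have hQpos : 0 < Q := by
    obtain ⟨i, hi⟩ : ∃ i, y i ≠ 0 := by
      by_contra h
      push_neg at h
      exact hy0 (funext h)
    apply Finset.sum_pos'
    · intro j _
      exact mul_nonneg (hdpos j).le (sq_nonneg _)
    · exact ⟨i, Finset.mem_univ i, mul_pos (hdpos i) (by positivity)⟩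
  -- Jensen / Cauchy-Schwarz: (z i)^2 ≤ ∑ j, P i j * (y j)^2
  have hz2 : ∀ i, (z i)^2 ≤ ∑ j, P i j * (y j)^2 := by
    intro i
    have hcs := Finset.sum_mul_sq_le_sq_mul_sq Finset.univ
      (fun j => Real.sqrt (P i j)) (fun j => Real.sqrt (P i j) * y j)
    have e1 : ∀ j, Real.sqrt (P i j) * (Real.sqrt (P i j) * y j) = P i j * y j := by
      intro j
      rw [← mul_assoc, Real.mul_self_sqrt (hPnonneg i j)]
    have e2 : ∀ j, Real.sqrt (P i j) ^ 2 = P i j := fun j => Real.sq_sqrt (hPnonneg i j)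
    simp only [e1, mul_pow, e2] at hcs
    calc (z i)^2 = (∑ j, P i j * y j)^2 := by rw [hz]; rfl
      _ ≤ (∑ j, P i j) * ∑ j, P i j * (y j)^2 := hcs
      _ = ∑ j, P i j * (y j)^2 := by rw [hProw i, one_mul]
  -- ∑ i, dv i * (z i)^2 ≤ Q using stationarity
  have hzQ : ∑ i, dv i * (z i)^2 ≤ Q := by
    calc ∑ i, dv i * (z i)^2 ≤ ∑ i, dv i * ∑ j, P i j * (y j)^2 := by
          apply Finset.sum_le_sum
          intro i _
          exact mul_le_mul_of_nonneg_left (hz2 i) (hdpos i).le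
      _ = ∑ j, (∑ i, dv i * P i j) * (y j)^2 := by
          simp_rw [Finset.mul_sum, Finset.sum_mul]
          rw [Finset.sum_comm]
          exact Finset.sum_congr rfl fun j _ => Finset.sum_congr rfl fun i _ => by ring
      _ = Q := by
          rw [hQ]
          refine Finset.sum_congr rfl fun j _ => ?_
          have := congrFun hstat j
          simp only [Matrix.vecMul, dotProduct] at this
          rw [this]
  -- cross term bound
  have hcross : ∑ i, dv i * (y i * z i) ≤ Q := by
    have h1 : ∀ i, dv i * (y i * z i) ≤ dv i * (((y i)^2 + (z i)^2) / 2) := by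
      intro i
      apply mul_le_mul_of_nonneg_left _ (hdpos i).le
      nlinarith [two_mul_le_add_sq (y i) (z i)]
    calc ∑ i, dv i * (y i * z i) ≤ ∑ i, dv i * (((y i)^2 + (z i)^2) / 2) :=
          Finset.sum_le_sum fun i _ => h1 i
      _ = ((∑ i, dv i * (y i)^2) + ∑ i, dv i * (z i)^2) / 2 := by
          rw [← Finset.sum_add_distrib, Finset.sum_div]
          exact Finset.sum_congr rfl fun i _ => by ring
      _ ≤ (Q + Q) / 2 := by
          apply div_le_div_of_nonneg_right _ (by norm_num)
          exact add_le_add (le_of_eq hQ.symm) hzQ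
      _ = Q := by ring
  -- finish
  have hsplit : ∑ i, dv i * (y i * (γ * z i - y i))
      = γ * (∑ i, dv i * (y i * z i)) - Q := by
    rw [hQ, Finset.mul_sum, ← Finset.sum_sub_distrib]
    exact Finset.sum_congr rfl fun i _ => by ring
  rw [hsplit]
  have : γ * (∑ i, dv i * (y i * z i)) ≤ γ * Q := mul_le_mul_of_nonneg_left hcross hγ0
  nlinarith
end
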